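/- Let B ⊂ ℝ^N be an open ball containing Ω̄, let λ > 0, let f be continuous with f(0) ≥ 0, and let u be a nonnegative solution of −div(φ(|∇u|)∇u) = λ f(u) in Ω, u = 0 on ∂Ω. Define α on B by α = u on Ω and α = 0 on B \ Ω, and let ∇α denote the extension of ∇u to B by zero outside Ω. Then α is a lower solution of −div(φ(|∇α|)∇α) = λ f(α) on B; that is, for every w ∈ C₀^∞(B) with w ≥ 0 one has ∫_B φ(|∇α|)∇α·∇w dx ≤ λ ∫_B f(α) w dx. -/

import Mathlib

open MeasureTheory Set Filter
open scoped RealInnerProductSpace Topology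

set_option maxHeartbeats 1000000

/-- `expNegInvGlue` is monotone. -/
lemma expNegInvGlue_monotone : Monotone expNegInvGlue := by
  intro x y hxy
  by_cases hx : x ≤ 0
  · rw [expNegInvGlue.zero_of_nonpos hx]
    exact expNegInvGlue.nonneg y
  · have hx' : 0 < x := not_le.mp hx
    have hy' : ¬ y ≤ 0 := fun h => hx (hxy.trans h)
    show (if x ≤ 0 then 0 else Real.exp (-x⁻¹)) ≤ (if y ≤ 0 then 0 else Real.exp (-y⁻¹))
    rw [if_neg hx, if_neg hy']
    apply Real.exp_le_exp.2
    have : y⁻¹ ≤ x⁻¹ := by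
      apply inv_anti₀ hx' hxy
    linarith

/-- `Real.smoothTransition` is monotone. -/
lemma smoothTransition_monotone : Monotone Real.smoothTransition := by
  intro x y hxy
  unfold Real.smoothTransition
  rw [div_le_div_iff₀ (Real.smoothTransition.pos_denom x) (Real.smoothTransition.pos_denom y)]
  have h1 : expNegInvGlue x ≤ expNegInvGlue y := expNegInvGlue_monotone hxy
  have h2 : expNegInvGlue (1 - y) ≤ expNegInvGlue (1 - x) :=
    expNegInvGlue_monotone (by linarith)
  nlinarith [expNegInvGlue.nonneg x, expNegInvGlue.nonneg y, expNegInvGlue.nonneg (1 - x),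
    expNegInvGlue.nonneg (1 - y)]

/-- The derivative of a monotone function is nonnegative. -/
lemma monotone_deriv_nonneg {f : ℝ → ℝ} (hf : Monotone f) (x : ℝ) : 0 ≤ deriv f x := by
  by_cases hd : DifferentiableAt ℝ f x
  · have h := hasDerivAt_iff_tendsto_slope.1 hd.hasDerivAt
    have h2 : Tendsto (slope f x) (𝓝[>] x) (𝓝 (deriv f x)) :=
      h.mono_left (nhdsWithin_mono x (fun y (hy : x < y) => (ne_of_gt hy : y ≠ x)))
    refine ge_of_tendsto h2 ?_
    filter_upwards [eventually_mem_nhdsWithin] with y (hy : x < y)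
    have : slope f x y = (y - x)⁻¹ * (f y - f x) := rfl
    rw [this]
    have h3 : 0 ≤ f y - f x := sub_nonneg.2 (hf hy.le)
    have h4 : 0 ≤ (y - x)⁻¹ := inv_nonneg.2 (by linarith)
    positivity
  · rw [deriv_zero_of_not_differentiableAt hd]

/-- `u` is a solution of `-div(φ(|∇u|)∇u) = λ f(u)` in `Ω`, `u = 0` on `∂Ω`:
`u ∈ C¹(Ω̄)`, `u = 0` on `∂Ω`, and the weak formulation holds for all test
functions `v ∈ C¹(Ω̄)` vanishing on `∂Ω`. -/
def IsWeakSolution {N : ℕ} (Ω : Set (EuclideanSpace ℝ (Fin N)))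
    (φ : ℝ → ℝ) (lam : ℝ) (f : ℝ → ℝ) (u : EuclideanSpace ℝ (Fin N) → ℝ) : Prop :=
  ContDiffOn ℝ 1 u (closure Ω) ∧ (∀ x ∈ frontier Ω, u x = 0) ∧
  ∀ v : EuclideanSpace ℝ (Fin N) → ℝ, ContDiffOn ℝ 1 v (closure Ω) →
    (∀ x ∈ frontier Ω, v x = 0) →
    ∫ x in Ω, ⟪(φ ‖gradient u x‖) • gradient u x, gradient v x⟫ =
      lam * ∫ x in Ω, f (u x) * v x

/-- The zero extension `α` of a nonnegative solution `u` on `Ω` to a larger ball `B`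
is a lower solution of the corresponding problem on `B`: for every nonnegative
`w ∈ C₀^∞(B)` one has `∫_B φ(|∇α|)∇α·∇w ≤ λ ∫_B f(α) w`, where `∇α` denotes the
zero extension of `∇u`. -/
theorem zero_extension_is_lower_solution
    {N : ℕ} (hN : 0 < N) (Ω : Set (EuclideanSpace ℝ (Fin N)))
    (hΩo : IsOpen Ω) (hΩb : Bornology.IsBounded Ω) (hΩc : IsConnected Ω)
    (φ : ℝ → ℝ) (hφC1 : ContDiffOn ℝ 1 φ (Ioi 0)) (hφpos : ∀ t > 0, 0 < φ t)
    (hφ1i : Tendsto (fun t => t * φ t) (𝓝[>] 0) (𝓝 0))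
    (hφ1ii : Tendsto (fun t => t * φ t) atTop atTop)
    (hφ2 : StrictMonoOn (fun t => t * φ t) (Ioi 0))
    (f : ℝ → ℝ) (hfcont : ContinuousOn f (Ici 0)) (hf1 : 0 ≤ f 0)
    (lam : ℝ) (hlam : 0 < lam)
    (c : EuclideanSpace ℝ (Fin N)) (R : ℝ) (hR : 0 < R)
    (hB : closure Ω ⊆ Metric.ball c R)
    (u : EuclideanSpace ℝ (Fin N) → ℝ) (hu : IsWeakSolution Ω φ lam f u)
    (hunn : ∀ x ∈ Ω, 0 ≤ u x)
    (α : EuclideanSpace ℝ (Fin N) → ℝ) (hα : α = Ω.indicator u)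
    (gradα : EuclideanSpace ℝ (Fin N) → EuclideanSpace ℝ (Fin N))
    (hgradα : gradα = Ω.indicator (fun y => gradient u y)) :
    ∀ w : EuclideanSpace ℝ (Fin N) → ℝ, ContDiff ℝ (⊤ : ℕ∞) w → HasCompactSupport w →
      tsupport w ⊆ Metric.ball c R → (∀ x, 0 ≤ w x) →
      ∫ x in Metric.ball c R, ⟪(φ ‖gradα x‖) • gradα x, gradient w x⟫ ≤
        lam * ∫ x in Metric.ball c R, f (α x) * w x := by
  intro w hwsm hwcs hwsup hwnn
  obtain ⟨huC, hu0, hweak⟩ := hu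
  have hΩS : Ω ⊆ closure Ω := subset_closure
  have hΩmeas : MeasurableSet Ω := hΩo.measurableSet
  have hΩfin : volume Ω < ⊤ := hΩb.measure_lt_top
  have hΩB : Ω ⊆ Metric.ball c R := fun x hx => hB (hΩS hx)
  have hSc : IsCompact (closure Ω) :=
    Metric.isCompact_of_isClosed_isBounded isClosed_closure hΩb.closure
  have hucl : ContinuousOn u (closure Ω) := huC.continuousOn
  have hucΩ : ContinuousOn u Ω := hucl.mono hΩS
  have hunnS : ∀ x ∈ closure Ω, 0 ≤ u x := by
    intro x hx
    rw [closure_eq_interior_union_frontier, hΩo.interior_eq] at hx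
    rcases hx with hx | hx
    exacts [hunn x hx, (hu0 x hx).ge]
  -- differentiability of u inside Ω
  have hdiffAt : ∀ x ∈ Ω, DifferentiableAt ℝ u x := by
    intro x hx
    exact ((huC x (hΩS hx)).contDiffAt
      (Filter.mem_of_superset (hΩo.mem_nhds hx) hΩS)).differentiableAt one_ne_zero
  -- continuity of the gradient on Ω
  have hfdcont : ContinuousOn (fderiv ℝ u) Ω :=
    (huC.mono hΩS).continuousOn_fderiv_of_isOpen hΩo le_rfl
  have hgradcont : ContinuousOn (fun x => gradient u x) Ω := by
    show ContinuousOn (fun x => (InnerProductSpace.toDual ℝ _).symm (fderiv ℝ u x)) Ω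
    exact (InnerProductSpace.toDual ℝ _).symm.continuous.comp_continuousOn hfdcont
  have hgnorm : ∀ x, ‖gradient u x‖ = ‖fderiv ℝ u x‖ := by
    intro x
    show ‖(InnerProductSpace.toDual ℝ _).symm (fderiv ℝ u x)‖ = _
    exact LinearIsometryEquiv.norm_map _ _
  -- inner products against gradients are derivatives
  have inner_grad : ∀ (ψ : EuclideanSpace ℝ (Fin N) → ℝ) (y z : EuclideanSpace ℝ (Fin N)),
      ⟪z, gradient ψ y⟫ = fderiv ℝ ψ y z := by
    intro ψ y z
    rw [real_inner_comm]
    exact InnerProductSpace.toDual_symm_apply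
  -- vanishing of the gradient at interior zeros of u
  have hgrad0 : ∀ x ∈ Ω, u x = 0 → gradient u x = 0 := by
    intro x hx hux
    have hloc : IsLocalMin u x := by
      have : ∀ᶠ y in 𝓝 x, u x ≤ u y := by
        filter_upwards [hΩo.mem_nhds hx] with y hy
        rw [hux]; exact hunn y hy
      exact this
    have h0 : fderiv ℝ u x = 0 := hloc.fderiv_eq_zero
    show (InnerProductSpace.toDual ℝ _).symm (fderiv ℝ u x) = 0
    rw [h0]; exact map_zero _
  -- a uniform bound for the derivative of u on Ω
  have hbdd : ∃ C : ℝ, ∀ y ∈ closure Ω ∩ Ω, ‖fderiv ℝ u y‖ ≤ C := by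
    refine hSc.induction_on (p := fun t => ∃ C : ℝ, ∀ y ∈ t ∩ Ω, ‖fderiv ℝ u y‖ ≤ C)
      ⟨0, by simp⟩ ?_ ?_ ?_
    · rintro s t hst ⟨C, hC⟩
      exact ⟨C, fun y hy => hC y ⟨hst hy.1, hy.2⟩⟩
    · rintro s t ⟨C₁, h1⟩ ⟨C₂, h2⟩
      refine ⟨max C₁ C₂, fun y hy => ?_⟩
      rcases hy.1 with h | h
      exacts [(h1 y ⟨h, hy.2⟩).trans (le_max_left _ _),
        (h2 y ⟨h, hy.2⟩).trans (le_max_right _ _)]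
    · intro x hx
      have hcd : ContDiffWithinAt ℝ ((1 : ℕ) : WithTop ℕ∞) u (closure Ω) x := by
        exact_mod_cast huC x hx
      obtain ⟨t, ht, p, hp⟩ := contDiffWithinAt_nat.1 hcd
      rw [insert_eq_of_mem hx] at ht
      have hxt : x ∈ t := mem_of_mem_nhdsWithin hx ht
      set C : ℝ := ‖p x 1‖ + 1 with hC
      have hcont : ContinuousWithinAt (fun y => p y 1) t x :=
        (hp.cont 1 le_rfl).continuousWithinAt hxt
      have hopen : IsOpen {z : ContinuousMultilinearMap ℝ (fun _ : Fin 1 =>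
          EuclideanSpace ℝ (Fin N)) ℝ | ‖z‖ < C} := isOpen_lt continuous_norm continuous_const
      have hev : {y | ‖p y 1‖ < C} ∈ 𝓝[t] x :=
        hcont (hopen.mem_nhds (by simp [hC]))
      have hev' : {y | ‖p y 1‖ < C} ∈ 𝓝[closure Ω] x := nhdsWithin_le_of_mem ht hev
      obtain ⟨V₁, hV₁o, hxV₁, hV₁⟩ := mem_nhdsWithin.1 ht
      obtain ⟨V₂, hV₂o, hxV₂, hV₂⟩ := mem_nhdsWithin.1 hev'
      refine ⟨(V₁ ∩ V₂) ∩ closure Ω, ?_, C, ?_⟩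
      · exact mem_nhdsWithin.2 ⟨V₁ ∩ V₂, hV₁o.inter hV₂o, ⟨hxV₁, hxV₂⟩, fun z hz => hz⟩
      · rintro y ⟨⟨⟨hyV₁, hyV₂⟩, hyS⟩, hyΩ⟩
        have hyt : y ∈ t := hV₁ ⟨hyV₁, hyS⟩
        have hfd := hp.hasFDerivWithinAt (by simp) hyt
        have htnhds : t ∈ 𝓝 y := by
          refine Filter.mem_of_superset
            (((hV₁o.inter hV₂o).inter hΩo).mem_nhds ⟨⟨hyV₁, hyV₂⟩, hyΩ⟩) ?_
          rintro z ⟨⟨hz1, _⟩, hz3⟩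
          exact hV₁ ⟨hz1, hΩS hz3⟩
        have heq := (hfd.hasFDerivAt htnhds).fderiv
        rw [heq]
        calc ‖(continuousMultilinearCurryFin1 ℝ (EuclideanSpace ℝ (Fin N)) ℝ) (p y 1)‖
            = ‖p y 1‖ := LinearIsometryEquiv.norm_map _ _
          _ ≤ C := (hV₂ ⟨hyV₂, hyS⟩).le
  obtain ⟨M₀, hM₀⟩ := hbdd
  set M : ℝ := |M₀| + 1 with hMdef
  have hMpos : 0 < M := by positivity
  have hgM : ∀ x ∈ Ω, ‖gradient u x‖ ≤ M := by
    intro x hx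
    rw [hgnorm]
    calc ‖fderiv ℝ u x‖ ≤ M₀ := hM₀ x ⟨hΩS hx, hx⟩
      _ ≤ |M₀| + 1 := by
          have := le_abs_self M₀; linarith
  -- the vector field A
  set A : EuclideanSpace ℝ (Fin N) → EuclideanSpace ℝ (Fin N) := fun ξ => φ ‖ξ‖ • ξ with hAdef
  have hA0 : A 0 = 0 := by simp [hAdef]
  set C₁ : ℝ := M * φ M with hC₁def
  have hC₁pos : 0 < C₁ := mul_pos hMpos (hφpos M hMpos)
  have hAnorm : ∀ ξ : EuclideanSpace ℝ (Fin N), ‖ξ‖ ≤ M → ‖A ξ‖ ≤ C₁ := by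
    intro ξ hξ
    rcases eq_or_ne ξ 0 with rfl | hne
    · rw [hA0]; simpa using hC₁pos.le
    · have hpos : 0 < ‖ξ‖ := norm_pos_iff.2 hne
      have : ‖A ξ‖ = ‖ξ‖ * φ ‖ξ‖ := by
        rw [hAdef]
        simp only [norm_smul, Real.norm_eq_abs]
        rw [abs_of_pos (hφpos _ hpos)]
        ring
      rw [this]
      rcases eq_or_lt_of_le hξ with h | h
      · rw [h]
      · exact (hφ2 hpos hMpos h).le
  have hAself : ∀ ξ : EuclideanSpace ℝ (Fin N), 0 ≤ ⟪A ξ, ξ⟫ := by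
    intro ξ
    rcases eq_or_ne ξ 0 with rfl | hne
    · simp
    · rw [hAdef]
      simp only
      rw [real_inner_smul_left]
      exact mul_nonneg (hφpos _ (norm_pos_iff.2 hne)).le real_inner_self_nonneg
  -- continuity of A
  have hAcont : Continuous A := by
    rw [continuous_iff_continuousAt]
    intro ξ
    rcases eq_or_ne ξ 0 with rfl | hξ
    · rw [ContinuousAt, hA0, NormedAddCommGroup.tendsto_nhds_zero]
      intro ε hε
      obtain ⟨δ, hδ, hδ'⟩ := Metric.tendsto_nhdsWithin_nhds.1 hφ1i ε hε
      filter_upwards [Metric.ball_mem_nhds (0 : EuclideanSpace ℝ (Fin N)) hδ] with η hη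
      rcases eq_or_ne η 0 with rfl | hη0
      · rw [hA0]; simpa using hε
      · have hn : ‖η‖ ∈ Ioi (0 : ℝ) := norm_pos_iff.2 hη0
        have hd : dist ‖η‖ 0 < δ := by
          rw [Real.dist_eq, sub_zero, abs_of_nonneg (norm_nonneg _)]
          simpa [dist_eq_norm] using hη
        have hlt := hδ' hn hd
        rw [Real.dist_eq, sub_zero] at hlt
        have : ‖A η‖ = |‖η‖ * φ ‖η‖| := by
          rw [hAdef]
          simp only [norm_smul, Real.norm_eq_abs, abs_mul, abs_of_nonneg (norm_nonneg η)]
          ring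
        rw [this]; exact hlt
    · have h1 : ContinuousAt φ ‖ξ‖ :=
        hφC1.continuousOn.continuousAt (isOpen_Ioi.mem_nhds (norm_pos_iff.2 hξ))
      exact ((h1.comp continuous_norm.continuousAt).smul continuousAt_id)
  have hAg : ContinuousOn (fun x => A (gradient u x)) Ω :=
    hAcont.comp_continuousOn hgradcont
  have hAgb : ∀ x ∈ Ω, ‖A (gradient u x)‖ ≤ C₁ := fun x hx => hAnorm _ (hgM x hx)
  have hinb : ∀ x ∈ Ω, |⟪A (gradient u x), gradient u x⟫| ≤ C₁ * M := by
    intro x hx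
    exact (abs_real_inner_le_norm _ _).trans
      (mul_le_mul (hAgb x hx) (hgM x hx) (norm_nonneg _) hC₁pos.le)
  -- facts about w
  have hwd : Differentiable ℝ w := hwsm.differentiable (by simp)
  have hgwcont : Continuous (fun x => gradient w x) := by
    show Continuous (fun x => (InnerProductSpace.toDual ℝ _).symm (fderiv ℝ w x))
    exact (InnerProductSpace.toDual ℝ _).symm.continuous.comp (hwsm.continuous_fderiv (by simp))
  obtain ⟨Kw₀, hKw₀⟩ : ∃ C, ∀ x, ‖gradient w x‖ ≤ C := by
    have h2 : HasCompactSupport (fun x => gradient w x) := by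
      have := (hwcs.fderiv ℝ).comp_left
        (g := ((InnerProductSpace.toDual ℝ (EuclideanSpace ℝ (Fin N))).symm :
          (EuclideanSpace ℝ (Fin N) →L[ℝ] ℝ) → EuclideanSpace ℝ (Fin N))) (map_zero _)
      exact this
    exact hgwcont.bounded_above_of_compact_support h2
  set Kw : ℝ := |Kw₀| + 1 with hKwdef
  have hKw : ∀ x, ‖gradient w x‖ ≤ Kw := fun x =>
    (hKw₀ x).trans (by rw [hKwdef]; have := le_abs_self Kw₀; linarith)
  have hKwpos : 0 < Kw := by positivity
  obtain ⟨Kv₀, hKv₀⟩ : ∃ C, ∀ x, ‖w x‖ ≤ C :=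
    hwsm.continuous.bounded_above_of_compact_support hwcs
  set Kv : ℝ := |Kv₀| + 1 with hKvdef
  have hKv : ∀ x, ‖w x‖ ≤ Kv := fun x =>
    (hKv₀ x).trans (by rw [hKvdef]; have := le_abs_self Kv₀; linarith)
  have hKvpos : 0 < Kv := by positivity
  -- bound on f ∘ u
  obtain ⟨Cf₀, hCf₀⟩ : ∃ C, ∀ x ∈ closure Ω, ‖f (u x)‖ ≤ C :=
    hSc.exists_bound_of_continuousOn (hfcont.comp hucl hunnS)
  set Cf : ℝ := |Cf₀| + 1 with hCfdef
  have hCf : ∀ x ∈ closure Ω, ‖f (u x)‖ ≤ Cf := fun x hx =>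
    (hCf₀ x hx).trans (by rw [hCfdef]; have := le_abs_self Cf₀; linarith)
  have hCfpos : 0 < Cf := by positivity
  -- the cutoff function θ
  set θ : ℝ → ℝ := fun s => Real.smoothTransition (s - 1) with hθdef
  have hθC2 : ContDiff ℝ 2 θ :=
    Real.smoothTransition.contDiff.comp (contDiff_id.sub contDiff_const)
  have hθC1 : ContDiff ℝ 1 θ := hθC2.of_le one_le_two
  have hθd : Differentiable ℝ θ := hθC1.differentiable one_ne_zero
  have hθ'cont : Continuous (deriv θ) := hθC2.continuous_deriv one_le_two
  have hθ0 : ∀ s : ℝ, s ≤ 1 → θ s = 0 := fun s hs =>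
    Real.smoothTransition.zero_of_nonpos (by linarith)
  have hθ1 : ∀ s : ℝ, 2 ≤ s → θ s = 1 := fun s hs =>
    Real.smoothTransition.one_of_one_le (by linarith)
  have hθnn : ∀ s, 0 ≤ θ s := fun s => Real.smoothTransition.nonneg _
  have hθle1 : ∀ s, θ s ≤ 1 := fun s => Real.smoothTransition.le_one _
  have hθmono : Monotone θ := fun a b hab => smoothTransition_monotone (by simpa using hab)
  have hθ'nn : ∀ s, 0 ≤ deriv θ s := monotone_deriv_nonneg hθmono
  obtain ⟨D₀, hD₀⟩ : ∃ C, ∀ s, ‖deriv θ s‖ ≤ C := by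
    have hsupp : ∀ t : ℝ, t ∉ Icc (1 : ℝ) 2 → deriv θ t = 0 := by
      intro t ht
      rw [mem_Icc, not_and_or] at ht
      rcases ht with ht | ht
      · push_neg at ht
        have hev : θ =ᶠ[𝓝 t] fun _ => 0 := by
          filter_upwards [Iio_mem_nhds ht] with y hy
          exact hθ0 y hy.le
        rw [hev.deriv_eq, deriv_const]
      · push_neg at ht
        have hev : θ =ᶠ[𝓝 t] fun _ => 1 := by
          filter_upwards [Ioi_mem_nhds ht] with y hy
          exact hθ1 y hy.le
        rw [hev.deriv_eq, deriv_const]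
    exact hθ'cont.bounded_above_of_compact_support
      (HasCompactSupport.intro isCompact_Icc hsupp)
  set D : ℝ := |D₀| + 1 with hDdef
  have hD : ∀ s, ‖deriv θ s‖ ≤ D := fun s =>
    (hD₀ s).trans (by rw [hDdef]; have := le_abs_self D₀; linarith)
  -- auxiliary functions
  set G : EuclideanSpace ℝ (Fin N) → ℝ := fun x => ⟪A (gradient u x), gradient w x⟫ with hGdef
  set v : ℕ → EuclideanSpace ℝ (Fin N) → ℝ :=
    fun n x => w x * θ (((n : ℝ) + 1) * u x) with hvdef
  set T1 : ℕ → EuclideanSpace ℝ (Fin N) → ℝ :=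
    fun n x => θ (((n : ℝ) + 1) * u x) * G x with hT1def
  set T2 : ℕ → EuclideanSpace ℝ (Fin N) → ℝ :=
    fun n x => w x * (deriv θ (((n : ℝ) + 1) * u x) *
      (((n : ℝ) + 1) * ⟪A (gradient u x), gradient u x⟫)) with hT2def
  set RR : ℕ → EuclideanSpace ℝ (Fin N) → ℝ := fun n x => f (u x) * v n x with hRRdef
  set Q : EuclideanSpace ℝ (Fin N) → ℝ :=
    fun x => if u x = 0 then 0 else f (u x) * w x with hQdef
  -- integrability helper
  have intOn : ∀ (F : EuclideanSpace ℝ (Fin N) → ℝ) (C : ℝ), ContinuousOn F Ω →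
      (∀ x ∈ Ω, ‖F x‖ ≤ C) → IntegrableOn F Ω := by
    intro F C hFc hFb
    refine Integrable.mono' (g := fun _ => C) (integrableOn_const hΩfin.ne)
      (hFc.aestronglyMeasurable hΩmeas) ?_
    exact (ae_restrict_iff' hΩmeas).2 (Filter.Eventually.of_forall hFb)
  -- continuity facts on Ω
  have hGcont : ContinuousOn G Ω := hAg.inner (hgwcont.continuousOn)
  have hGb : ∀ x ∈ Ω, ‖G x‖ ≤ C₁ * Kw := by
    intro x hx
    rw [hGdef]
    exact (abs_real_inner_le_norm _ _).trans
      (mul_le_mul (hAgb x hx) (hKw x) (norm_nonneg _) hC₁pos.le)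
  have hGint : IntegrableOn G Ω := intOn G (C₁ * Kw) hGcont hGb
  have hθucont : ∀ n : ℕ, ContinuousOn (fun x => θ (((n : ℝ) + 1) * u x)) Ω := by
    intro n
    exact hθC1.continuous.comp_continuousOn (continuousOn_const.mul hucΩ)
  have hT1cont : ∀ n, ContinuousOn (T1 n) Ω := fun n => (hθucont n).mul hGcont
  have hT1b : ∀ n, ∀ x ∈ Ω, ‖T1 n x‖ ≤ C₁ * Kw := by
    intro n x hx
    rw [hT1def]
    simp only [Real.norm_eq_abs, abs_mul]
    calc |θ (((n : ℝ) + 1) * u x)| * |G x| ≤ 1 * (C₁ * Kw) := by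
          apply mul_le_mul _ (hGb x hx) (abs_nonneg _) zero_le_one
          rw [abs_of_nonneg (hθnn _)]; exact hθle1 _
      _ = C₁ * Kw := one_mul _
  have hT1int : ∀ n, IntegrableOn (T1 n) Ω := fun n => intOn _ _ (hT1cont n) (hT1b n)
  have hT2cont : ∀ n, ContinuousOn (T2 n) Ω := by
    intro n
    refine (hwsm.continuous.continuousOn).mul (ContinuousOn.mul ?_ (ContinuousOn.mul
      continuousOn_const (hAg.inner hgradcont)))
    exact hθ'cont.comp_continuousOn (continuousOn_const.mul hucΩ)
  have hT2b : ∀ n, ∀ x ∈ Ω, ‖T2 n x‖ ≤ Kv * (D * (((n : ℝ) + 1) * (C₁ * M))) := by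
    intro n x hx
    rw [hT2def]
    simp only [Real.norm_eq_abs, abs_mul]
    have h1 : |w x| ≤ Kv := by rw [← Real.norm_eq_abs]; exact hKv x
    have h2 : |deriv θ (((n : ℝ) + 1) * u x)| ≤ D := by rw [← Real.norm_eq_abs]; exact hD _
    have h3 : |((n : ℝ) + 1)| = ((n : ℝ) + 1) := abs_of_pos (by positivity)
    have h4 := hinb x hx
    have hn1 : (0:ℝ) ≤ (n : ℝ) + 1 := by positivity
    rw [h3]
    apply mul_le_mul h1 _ (by positivity) hKvpos.le
    apply mul_le_mul h2 _ (by positivity) (by rw [hDdef]; positivity)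
    apply mul_le_mul le_rfl h4 (abs_nonneg _) hn1
  have hT2int : ∀ n, IntegrableOn (T2 n) Ω := fun n => intOn _ _ (hT2cont n) (hT2b n)
  have hT2nn : ∀ n, ∀ x ∈ Ω, 0 ≤ T2 n x := by
    intro n x hx
    rw [hT2def]
    have hn1 : (0:ℝ) ≤ (n : ℝ) + 1 := by positivity
    exact mul_nonneg (hwnn x) (mul_nonneg (hθ'nn _) (mul_nonneg hn1 (hAself _)))
  have hRRcont : ∀ n, ContinuousOn (RR n) Ω := by
    intro n
    refine ContinuousOn.mul (hfcont.comp hucΩ (fun x hx => hunn x hx)) ?_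
    exact (hwsm.continuous.continuousOn).mul (hθucont n)
  have hRRb : ∀ n, ∀ x ∈ Ω, ‖RR n x‖ ≤ Cf * Kv := by
    intro n x hx
    rw [hRRdef, hvdef]
    simp only [Real.norm_eq_abs, abs_mul]
    have h1 : |f (u x)| ≤ Cf := by rw [← Real.norm_eq_abs]; exact hCf x (hΩS hx)
    have h2 : |w x| ≤ Kv := by rw [← Real.norm_eq_abs]; exact hKv x
    have h3 : |θ (((n : ℝ) + 1) * u x)| ≤ 1 := by
      rw [abs_of_nonneg (hθnn _)]; exact hθle1 _
    calc |f (u x)| * (|w x| * |θ (((n : ℝ) + 1) * u x)|)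
        ≤ Cf * (Kv * 1) := by
          apply mul_le_mul h1 _ (by positivity) hCfpos.le
          exact mul_le_mul h2 h3 (abs_nonneg _) hKvpos.le
      _ = Cf * Kv := by ring
  have hRRint : ∀ n, IntegrableOn (RR n) Ω := fun n => intOn _ _ (hRRcont n) (hRRb n)
  have hfuwcont : ContinuousOn (fun x => f (u x) * w x) Ω :=
    (hfcont.comp hucΩ (fun x hx => hunn x hx)).mul (hwsm.continuous.continuousOn)
  have hfuwb : ∀ x ∈ Ω, ‖f (u x) * w x‖ ≤ Cf * Kv := by
    intro x hx
    rw [Real.norm_eq_abs, abs_mul]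
    exact mul_le_mul (by rw [← Real.norm_eq_abs]; exact hCf x (hΩS hx))
      (by rw [← Real.norm_eq_abs]; exact hKv x) (abs_nonneg _) hCfpos.le
  have hfuwint : IntegrableOn (fun x => f (u x) * w x) Ω := intOn _ _ hfuwcont hfuwb
  -- the key inequality from the weak formulation
  have key : ∀ n : ℕ, ∫ x in Ω, T1 n x ≤ lam * ∫ x in Ω, RR n x := by
    intro n
    have hvC : ContDiffOn ℝ 1 (v n) (closure Ω) := by
      rw [hvdef]
      exact ((hwsm.of_le (by simp)).contDiffOn).mul
        (hθC1.comp_contDiffOn (contDiffOn_const.mul huC))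
    have hvz : ∀ x ∈ frontier Ω, v n x = 0 := by
      intro x hx
      rw [hvdef]
      simp only
      rw [hu0 x hx, mul_zero, hθ0 0 zero_le_one, mul_zero]
    have heq := hweak (v n) hvC hvz
    -- pointwise identity for the integrand
    have hgradv : ∀ x ∈ Ω,
        ⟪(φ ‖gradient u x‖) • gradient u x, gradient (v n) x⟫ = T1 n x + T2 n x := by
      intro x hx
      have hU : HasFDerivAt u (fderiv ℝ u x) x := (hdiffAt x hx).hasFDerivAt
      have hau : HasFDerivAt (fun y => ((n : ℝ) + 1) * u y)
          (((n : ℝ) + 1) • fderiv ℝ u x) x := hU.const_mul _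
      have hθ' : HasDerivAt θ (deriv θ (((n : ℝ) + 1) * u x)) (((n : ℝ) + 1) * u x) :=
        (hθd _).hasDerivAt
      have hcomp : HasFDerivAt (fun y => θ (((n : ℝ) + 1) * u y))
          (deriv θ (((n : ℝ) + 1) * u x) • (((n : ℝ) + 1) • fderiv ℝ u x)) x :=
        by have h := hθ'.comp_hasFDerivAt x hau; exact h
      have hw' : HasFDerivAt w (fderiv ℝ w x) x := (hwd x).hasFDerivAt
      have hv' : HasFDerivAt (v n)
          (w x • (deriv θ (((n : ℝ) + 1) * u x) • (((n : ℝ) + 1) • fderiv ℝ u x)) +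
            θ (((n : ℝ) + 1) * u x) • fderiv ℝ w x) x := hw'.mul hcomp
      have e1 : ⟪(φ ‖gradient u x‖) • gradient u x, gradient (v n) x⟫ =
          fderiv ℝ (v n) x ((φ ‖gradient u x‖) • gradient u x) := inner_grad _ _ _
      rw [e1, hv'.fderiv]
      have e2 : fderiv ℝ u x ((φ ‖gradient u x‖) • gradient u x) =
          ⟪(φ ‖gradient u x‖) • gradient u x, gradient u x⟫ := (inner_grad _ _ _).symm
      have e3 : fderiv ℝ w x ((φ ‖gradient u x‖) • gradient u x) =
          ⟪(φ ‖gradient u x‖) • gradient u x, gradient w x⟫ := (inner_grad _ _ _).symm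
      simp only [ContinuousLinearMap.add_apply, ContinuousLinearMap.coe_smul',
        Pi.smul_apply, smul_eq_mul]
      rw [e2, e3, hT1def, hT2def, hGdef, hAdef]
      simp only
      ring
    have hcongr : ∫ x in Ω, ⟪(φ ‖gradient u x‖) • gradient u x, gradient (v n) x⟫ =
        ∫ x in Ω, (T1 n x + T2 n x) := setIntegral_congr_fun hΩmeas hgradv
    rw [hcongr, integral_add (hT1int n) (hT2int n)] at heq
    have h2 : 0 ≤ ∫ x in Ω, T2 n x := setIntegral_nonneg hΩmeas (hT2nn n)
    have : ∫ x in Ω, f (u x) * v n x = ∫ x in Ω, RR n x := by rw [hRRdef]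
    rw [this] at heq
    linarith
  -- pointwise convergence of T1
  have hconv1 : ∀ x ∈ Ω, Tendsto (fun n : ℕ => T1 n x) atTop (𝓝 (G x)) := by
    intro x hx
    rcases eq_or_lt_of_le (hunn x hx) with heq | hlt
    · have hg0 : gradient u x = 0 := hgrad0 x hx heq.symm
      have hG0 : G x = 0 := by rw [hGdef]; simp only; rw [hg0, hA0, inner_zero_left]
      have hT0 : ∀ n : ℕ, T1 n x = 0 := by
        intro n
        rw [hT1def]
        simp only
        rw [← heq, mul_zero, hθ0 0 zero_le_one, zero_mul]
      rw [hG0]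
      simpa [hT0] using tendsto_const_nhds (α := ℝ) (f := atTop (α := ℕ))
    · have hev : ∀ᶠ n : ℕ in atTop, T1 n x = G x := by
        filter_upwards [eventually_ge_atTop ⌈2 / u x⌉₊] with n hn
        have h2 : 2 ≤ ((n : ℝ) + 1) * u x := by
          have h1 : (2 / u x) ≤ (n : ℝ) := le_trans (Nat.le_ceil _) (by exact_mod_cast hn)
          have : (2 / u x) * u x ≤ (n : ℝ) * u x := mul_le_mul_of_nonneg_right h1 hlt.le
          rw [div_mul_cancel₀ _ hlt.ne'] at this
          nlinarith
        rw [hT1def]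
        simp only
        rw [hθ1 _ h2, one_mul]
      exact Tendsto.congr' (by filter_upwards [hev] with n h using h.symm) tendsto_const_nhds
  -- pointwise convergence of RR
  have hconv2 : ∀ x ∈ Ω, Tendsto (fun n : ℕ => RR n x) atTop (𝓝 (Q x)) := by
    intro x hx
    rcases eq_or_lt_of_le (hunn x hx) with heq | hlt
    · have hQ0 : Q x = 0 := by rw [hQdef]; simp only; rw [if_pos heq.symm]
      have hR0 : ∀ n : ℕ, RR n x = 0 := by
        intro n
        rw [hRRdef, hvdef]
        simp only
        rw [← heq, mul_zero, hθ0 0 zero_le_one, mul_zero, mul_zero]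
      rw [hQ0]
      simpa [hR0] using tendsto_const_nhds (α := ℝ) (f := atTop (α := ℕ))
    · have hev : ∀ᶠ n : ℕ in atTop, RR n x = Q x := by
        filter_upwards [eventually_ge_atTop ⌈2 / u x⌉₊] with n hn
        have h2 : 2 ≤ ((n : ℝ) + 1) * u x := by
          have h1 : (2 / u x) ≤ (n : ℝ) := le_trans (Nat.le_ceil _) (by exact_mod_cast hn)
          have : (2 / u x) * u x ≤ (n : ℝ) * u x := mul_le_mul_of_nonneg_right h1 hlt.le
          rw [div_mul_cancel₀ _ hlt.ne'] at this
          nlinarith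
        rw [hRRdef, hvdef, hQdef]
        simp only
        rw [hθ1 _ h2, if_neg hlt.ne', mul_one]
      exact Tendsto.congr' (by filter_upwards [hev] with n h using h.symm) tendsto_const_nhds
  -- dominated convergence
  have hDCT1 : Tendsto (fun n => ∫ x in Ω, T1 n x) atTop (𝓝 (∫ x in Ω, G x)) := by
    refine tendsto_integral_of_dominated_convergence (bound := fun _ => C₁ * Kw) ?_ ?_ ?_ ?_
    · intro n; exact (hT1cont n).aestronglyMeasurable hΩmeas
    · exact integrableOn_const hΩfin.ne
    · intro n; exact (ae_restrict_iff' hΩmeas).2 (Filter.Eventually.of_forall (hT1b n))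
    · exact (ae_restrict_iff' hΩmeas).2 (Filter.Eventually.of_forall hconv1)
  have hDCT2 : Tendsto (fun n => ∫ x in Ω, RR n x) atTop (𝓝 (∫ x in Ω, Q x)) := by
    refine tendsto_integral_of_dominated_convergence (bound := fun _ => Cf * Kv) ?_ ?_ ?_ ?_
    · intro n; exact (hRRcont n).aestronglyMeasurable hΩmeas
    · exact integrableOn_const hΩfin.ne
    · intro n; exact (ae_restrict_iff' hΩmeas).2 (Filter.Eventually.of_forall (hRRb n))
    · exact (ae_restrict_iff' hΩmeas).2 (Filter.Eventually.of_forall hconv2)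
  -- main inequality on Ω
  have hmain : ∫ x in Ω, G x ≤ lam * ∫ x in Ω, Q x :=
    le_of_tendsto_of_tendsto' hDCT1 (hDCT2.const_mul lam) key
  -- Q is integrable and dominated by f(u)·w
  have hQmeas : AEStronglyMeasurable Q (volume.restrict Ω) :=
    aestronglyMeasurable_of_tendsto_ae atTop
      (fun n => (hRRcont n).aestronglyMeasurable hΩmeas)
      ((ae_restrict_iff' hΩmeas).2 (Filter.Eventually.of_forall hconv2))
  have hQb : ∀ x ∈ Ω, ‖Q x‖ ≤ Cf * Kv := by
    intro x hx
    rw [hQdef]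
    simp only
    split_ifs with h
    · simp; positivity
    · exact hfuwb x hx
  have hQint : IntegrableOn Q Ω :=
    Integrable.mono' (integrableOn_const hΩfin.ne) hQmeas
      ((ae_restrict_iff' hΩmeas).2 (Filter.Eventually.of_forall hQb))
  have hQle : ∫ x in Ω, Q x ≤ ∫ x in Ω, f (u x) * w x := by
    refine setIntegral_mono_on hQint hfuwint hΩmeas ?_
    intro x hx
    rw [hQdef]
    simp only
    split_ifs with h
    · rw [h]; exact mul_nonneg hf1 (hwnn x)
    · exact le_rfl
  -- assembling the left-hand side
  have hLHS : ∫ x in Metric.ball c R, ⟪(φ ‖gradα x‖) • gradα x, gradient w x⟫ =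
      ∫ x in Ω, G x := by
    have h1 : ∀ x, ⟪(φ ‖gradα x‖) • gradα x, gradient w x⟫ = Ω.indicator G x := by
      intro x
      by_cases hx : x ∈ Ω
      · rw [hgradα, indicator_of_mem hx, indicator_of_mem hx, hGdef, hAdef]
      · rw [hgradα, indicator_of_notMem hx, indicator_of_notMem hx]
        simp
    simp_rw [h1]
    rw [setIntegral_indicator hΩmeas, inter_eq_self_of_subset_right hΩB]
  -- assembling the right-hand side
  have hiΩ : IntegrableOn (fun x => f (α x) * w x) Ω := by
    refine hfuwint.congr_fun (fun x hx => ?_) hΩmeas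
    rw [hα, indicator_of_mem hx]
  have hiBdiff : IntegrableOn (fun x => f (α x) * w x) (Metric.ball c R \ Ω) := by
    have hbase : Integrable (fun x => f 0 * w x) :=
      (continuous_const.mul hwsm.continuous).integrable_of_hasCompactSupport
        (by simpa [mul_comm] using hwcs.mul_left (f := fun _ => f 0))
    refine hbase.integrableOn.congr_fun (fun x hx => ?_)
      (Metric.isOpen_ball.measurableSet.diff hΩmeas)
    rw [hα, indicator_of_notMem hx.2]
  have hiB : IntegrableOn (fun x => f (α x) * w x) (Metric.ball c R) := by
    have hdecomp := inter_union_diff (Metric.ball c R) Ω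
    have h1 : IntegrableOn (fun x => f (α x) * w x) (Metric.ball c R ∩ Ω) :=
      hiΩ.mono_set inter_subset_right
    exact hdecomp ▸ h1.union hiBdiff
  have hRHS : ∫ x in Ω, f (u x) * w x ≤ ∫ x in Metric.ball c R, f (α x) * w x := by
    have hsplit := integral_inter_add_diff (f := fun x => f (α x) * w x)
      (s := Metric.ball c R) (μ := volume) hΩmeas hiB
    have e1 : ∫ x in Metric.ball c R ∩ Ω, f (α x) * w x = ∫ x in Ω, f (u x) * w x := by
      rw [inter_eq_self_of_subset_right hΩB]
      refine setIntegral_congr_fun hΩmeas (fun x hx => ?_)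
      rw [hα, indicator_of_mem hx]
    have e2 : 0 ≤ ∫ x in Metric.ball c R \ Ω, f (α x) * w x := by
      refine setIntegral_nonneg (Metric.isOpen_ball.measurableSet.diff hΩmeas) ?_
      intro x hx
      rw [hα, indicator_of_notMem hx.2]
      exact mul_nonneg hf1 (hwnn x)
    linarith
  calc ∫ x in Metric.ball c R, ⟪(φ ‖gradα x‖) • gradα x, gradient w x⟫
      = ∫ x in Ω, G x := hLHS
    _ ≤ lam * ∫ x in Ω, Q x := hmain
    _ ≤ lam * ∫ x in Ω, f (u x) * w x := mul_le_mul_of_nonneg_left hQle hlam.le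
    _ ≤ lam * ∫ x in Metric.ball c R, f (α x) * w x := mul_le_mul_of_nonneg_left hRHS hlam.le
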